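/- Let 1/10 < σ < 1/2 and let t_1, …, t_n be non-negative real numbers with t_1 + … + t_n = 1. Then at least one of the following holds: (Type I) there exists an index i with t_i ≥ 1/2 + σ; (Type II) there exists a partition {1, …, n} = S ⊔ T into two disjoint sets such that 1/2 − σ < ∑_{i ∈ S} t_i ≤ ∑_{i ∈ T} t_i < 1/2 + σ; (Type III) there exist three distinct indices i, j, k with 2σ ≤ t_i ≤ t_j ≤ t_k ≤ 1/2 − σ and t_i + t_j ≥ 1/2 + σ, t_i + t_k ≥ 1/2 + σ, t_j + t_k ≥ 1/2 + σ. -/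
import Mathlib


/-- **Heath-Brown type combinatorial lemma (Lemma 1).** Let `1/10 < σ < 1/2` and let
`t_1, …, t_n` be non-negative real numbers with `t_1 + … + t_n = 1`. Then at least one of the
following holds:

* (Type I) there exists an index `i` with `t_i ≥ 1/2 + σ`;
* (Type II) there exists a partition `{1, …, n} = S ⊔ T` (here `T = Sᶜ`) such that
  `1/2 − σ < ∑_{i ∈ S} t_i ≤ ∑_{i ∈ T} t_i < 1/2 + σ`;
* (Type III) there exist three distinct indices `i, j, k` with
  `2σ ≤ t_i ≤ t_j ≤ t_k ≤ 1/2 − σ` and `t_i + t_j, t_i + t_k, t_j + t_k ≥ 1/2 + σ`. -/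
theorem stmt3
    (σ : ℝ) (hσ1 : 1/10 < σ) (hσ2 : σ < 1/2)
    (n : ℕ) (t : Fin n → ℝ) (ht : ∀ i, 0 ≤ t i) (hsum : ∑ i, t i = 1) :
    (∃ i, 1/2 + σ ≤ t i) ∨
    (∃ S : Finset (Fin n),
        1/2 - σ < ∑ i ∈ S, t i ∧
        ∑ i ∈ S, t i ≤ ∑ i ∈ Sᶜ, t i ∧
        ∑ i ∈ Sᶜ, t i < 1/2 + σ) ∨
    (∃ i j k : Fin n, i ≠ j ∧ i ≠ k ∧ j ≠ k ∧
        2 * σ ≤ t i ∧ t i ≤ t j ∧ t j ≤ t k ∧ t k ≤ 1/2 - σ ∧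
        1/2 + σ ≤ t i + t j ∧ 1/2 + σ ≤ t i + t k ∧ 1/2 + σ ≤ t j + t k) := by
  by_cases hI : ∃ i, 1/2 + σ ≤ t i
  · exact Or.inl hI
  by_cases hII : ∃ S : Finset (Fin n),
        1/2 - σ < ∑ i ∈ S, t i ∧
        ∑ i ∈ S, t i ≤ ∑ i ∈ Sᶜ, t i ∧
        ∑ i ∈ Sᶜ, t i < 1/2 + σ
  · exact Or.inr (Or.inl hII)
  right; right
  push_neg at hI
  -- the total sum splits over a set and its complement
  have hsplit : ∀ U : Finset (Fin n), ∑ i ∈ Uᶜ, t i = 1 - ∑ i ∈ U, t i := by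
    intro U
    have := Finset.sum_compl_add_sum U t
    rw [hsum] at this
    linarith
  -- Gap lemma: no subset sum lies in (1/2-σ, 1/2+σ)
  have hgap : ∀ U : Finset (Fin n),
      (∑ i ∈ U, t i) ≤ 1/2 - σ ∨ 1/2 + σ ≤ ∑ i ∈ U, t i := by
    intro U
    by_contra h
    push_neg at h
    obtain ⟨h1, h2⟩ := h
    apply hII
    rcases le_total (∑ i ∈ U, t i) (1/2) with hle | hge
    · exact ⟨U, h1, by rw [hsplit U]; linarith, by rw [hsplit U]; linarith⟩
    · exact ⟨Uᶜ, by rw [hsplit U]; linarith,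
        by rw [compl_compl, hsplit U]; linarith,
        by rw [compl_compl]; linarith⟩
  -- every single value is at most 1/2 - σ
  have hle : ∀ i, t i ≤ 1/2 - σ := by
    intro i
    have := hgap {i}
    simp only [Finset.sum_singleton] at this
    rcases this with h | h
    · exact h
    · exact absurd h (not_le.mpr (hI i))
  -- key extraction lemma
  have key : ∀ m : ℕ, ∀ U A : Finset (Fin n), U.card ≤ m → Disjoint A U →
      (∑ i ∈ A, t i) ≤ 1/2 - σ →
      1/2 - σ < (∑ i ∈ A, t i) + ∑ i ∈ U, t i →
      ∃ k ∈ U, 2 * σ ≤ t k := by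
    intro m
    induction m with
    | zero =>
      intro U A hcard _ hA hs
      have : U = ∅ := Finset.card_eq_zero.mp (Nat.le_zero.mp hcard)
      subst this
      simp at hs
      linarith
    | succ m ih =>
      intro U A hcard hdisj hA hs
      by_cases hc : ∃ k ∈ U, 1/2 - σ < (∑ i ∈ A, t i) + ∑ i ∈ U.erase k, t i
      · obtain ⟨k, hk, hlt⟩ := hc
        have hcard' : (U.erase k).card ≤ m := by
          rw [Finset.card_erase_of_mem hk]; omega
        have hdisj' : Disjoint A (U.erase k) :=
          hdisj.mono_right (Finset.erase_subset _ _)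
        obtain ⟨k', hk', hk'2⟩ := ih (U.erase k) A hcard' hdisj' hA hlt
        exact ⟨k', Finset.mem_of_mem_erase hk', hk'2⟩
      · push_neg at hc
        have hU : U.Nonempty := by
          by_contra h
          rw [Finset.not_nonempty_iff_eq_empty] at h
          subst h
          simp at hs
          linarith
        obtain ⟨k, hk⟩ := hU
        have hbig : 1/2 + σ ≤ (∑ i ∈ A, t i) + ∑ i ∈ U, t i := by
          have := hgap (A ∪ U)
          rw [Finset.sum_union hdisj] at this
          rcases this with h | h
          · linarith
          · exact h
        have herase : (∑ i ∈ U.erase k, t i) + t k = ∑ i ∈ U, t i :=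
          Finset.sum_erase_add U t hk
        have := hc k hk
        exact ⟨k, hk, by linarith⟩
  -- extract three distinct indices with value at least 2σ
  obtain ⟨k₁, _, h1⟩ := key n Finset.univ ∅ (by simp) (by simp)
    (by simp; linarith) (by simp [hsum]; linarith)
  have hU1 : (Finset.univ.erase k₁).card ≤ n := le_trans (Finset.card_erase_le) (by simp)
  have hsum1 : (∑ i ∈ Finset.univ.erase k₁, t i) + t k₁ = 1 := by
    rw [Finset.sum_erase_add _ _ (Finset.mem_univ k₁), hsum]
  obtain ⟨k₂, hk₂, h2⟩ := key n (Finset.univ.erase k₁) ∅ hU1 (by simp)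
    (by simp; linarith) (by simp; nlinarith [hle k₁])
  have hU2 : ((Finset.univ.erase k₁).erase k₂).card ≤ n :=
    le_trans (Finset.card_erase_le) hU1
  have hsum2 : (∑ i ∈ (Finset.univ.erase k₁).erase k₂, t i) + t k₂
      = ∑ i ∈ Finset.univ.erase k₁, t i :=
    Finset.sum_erase_add _ _ hk₂
  have hdisj3 : Disjoint {k₁} ((Finset.univ.erase k₁).erase k₂) := by
    simp [Finset.disjoint_left]
  obtain ⟨k₃, hk₃, h3⟩ := key n ((Finset.univ.erase k₁).erase k₂) {k₁} hU2 hdisj3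
    (by simp only [Finset.sum_singleton]; exact hle k₁)
    (by simp only [Finset.sum_singleton]; linarith [hsum1, hsum2, hle k₂])
  -- distinctness
  have n21 : k₂ ≠ k₁ := (Finset.mem_erase.mp hk₂).1
  have n32 : k₃ ≠ k₂ := (Finset.mem_erase.mp hk₃).1
  have n31 : k₃ ≠ k₁ := (Finset.mem_erase.mp (Finset.mem_of_mem_erase hk₃)).1
  -- pairwise sums
  have hpair : ∀ a b : Fin n, a ≠ b → 2 * σ ≤ t a → 2 * σ ≤ t b →
      1/2 + σ ≤ t a + t b := by
    intro a b hne ha hb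
    have := hgap {a, b}
    rw [Finset.sum_pair hne] at this
    rcases this with h | h
    · linarith
    · exact h
  have s12 := hpair k₁ k₂ n21.symm h1 h2
  have s13 := hpair k₁ k₃ n31.symm h1 h3
  have s23 := hpair k₂ k₃ n32.symm h2 h3
  -- sort the three indices by value
  rcases le_total (t k₁) (t k₂) with h12 | h21
  · rcases le_total (t k₂) (t k₃) with h23 | h32
    · exact ⟨k₁, k₂, k₃, n21.symm, n31.symm, n32.symm, h1, h12, h23, hle k₃,
        by linarith, by linarith, by linarith⟩
    · rcases le_total (t k₁) (t k₃) with h13 | h31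
      · exact ⟨k₁, k₃, k₂, n31.symm, n21.symm, n32, h1, h13, h32, hle k₂,
          by linarith, by linarith, by linarith⟩
      · exact ⟨k₃, k₁, k₂, n31, n32, n21.symm, h3, h31, h12, hle k₂,
          by linarith, by linarith, by linarith⟩
  · rcases le_total (t k₁) (t k₃) with h13 | h31
    · exact ⟨k₂, k₁, k₃, n21, n32.symm, n31.symm, h2, h21, h13, hle k₃,
        by linarith, by linarith, by linarith⟩
    · rcases le_total (t k₂) (t k₃) with h23 | h32
      · exact ⟨k₂, k₃, k₁, n32.symm, n21, n31, h2, h23, h31, hle k₁,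
          by linarith, by linarith, by linarith⟩
      · exact ⟨k₃, k₂, k₁, n32, n31, n21, h3, h32, h21, hle k₁,
          by linarith, by linarith, by linarith⟩
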